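/- arXiv:2212.10287 — 4 statements merged into one kernel-verified Lean document; each statement's English description precedes it below -/
import Mathlib

section
/- Let K: [0,∞) → [0,∞) be of bounded variation with total variation function H, with K(∞)=0, and suppose ∫₀^∞ a^{d+3} dH(a) < ∞ for some integer d ≥ 1. Then b · ∫_b^∞ K(a)·a^{d+1} da → 0 as b → ∞. -/
open Filter MeasureTheory
open scoped ENNReal Topology

/-- If `K : [0,∞) → [0,∞)` has bounded variation with total variation
function `H`, `K(∞) = 0`, and `∫₀^∞ a^(d+3) dH(a) < ∞` for some `d ≥ 1`, then
`b · ∫_b^∞ K(a)·a^(d+1) da → 0` as `b → ∞`. -/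
theorem stmt2 (d : ℕ) (hd : 1 ≤ d) (K : ℝ → ℝ) (hK0 : ∀ a, 0 ≤ K a)
    (hBV : BoundedVariationOn K (Set.Ici 0))
    (hKinf : Tendsto K atTop (𝓝 0))
    (H : StieltjesFunction ℝ)
    (hH : ∀ a, 0 ≤ a → H a = (eVariationOn K (Set.Icc 0 a)).toReal)
    (hint : ∫⁻ a in Set.Ici (0 : ℝ), ENNReal.ofReal (a ^ (d + 3)) ∂H.measure < ⊤) :
    Tendsto (fun b : ℝ => b * ∫ a in Set.Ioi b, K a * a ^ (d + 1)) atTop (𝓝 0) := by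
  set μ := H.measure with hμdef
  set f : ℝ → ℝ≥0∞ := fun t => ENNReal.ofReal (t ^ (d + 3)) with hfdef
  have hVfin : eVariationOn K (Set.Ici 0) ≠ ⊤ := hBV
  -- Step 1: pointwise tail bound `K a ≤ μ (Ioi a)`
  have step1 : ∀ a : ℝ, 0 ≤ a → ENNReal.ofReal (K a) ≤ μ (Set.Ioi a) := by
    intro a ha
    rcases eq_or_ne (μ (Set.Ioi a)) ⊤ with h | h
    · simp [h]
    have key : ∀ x : ℝ, a ≤ x →
        ENNReal.ofReal (K a) ≤ μ (Set.Ioi a) + ENNReal.ofReal (K x) := by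
      intro x hax
      have hx0 : (0 : ℝ) ≤ x := le_trans ha hax
      have hsub1 : Set.Icc (0 : ℝ) a ⊆ Set.Ici 0 := Set.Icc_subset_Ici_self
      have hsub2 : Set.Icc a x ⊆ Set.Ici (0 : ℝ) := fun t ht => le_trans ha ht.1
      have hfin1 : eVariationOn K (Set.Icc 0 a) ≠ ⊤ :=
        ne_top_of_le_ne_top hVfin (eVariationOn.mono K hsub1)
      have hfin2 : eVariationOn K (Set.Icc a x) ≠ ⊤ :=
        ne_top_of_le_ne_top hVfin (eVariationOn.mono K hsub2)
      have hadd := eVariationOn.Icc_add_Icc K (s := Set.Ici 0) ha hax ha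
      rw [Set.inter_eq_self_of_subset_right hsub1,
        Set.inter_eq_self_of_subset_right hsub2,
        Set.inter_eq_self_of_subset_right (Set.Icc_subset_Ici_self)] at hadd
      have hHx : H x - H a = (eVariationOn K (Set.Icc a x)).toReal := by
        rw [hH a ha, hH x hx0, ← hadd, ENNReal.toReal_add hfin1 hfin2]
        ring
      have hedist : edist (K a) (K x) ≤ eVariationOn K (Set.Icc a x) :=
        eVariationOn.edist_le K ⟨le_refl a, hax⟩ ⟨hax, le_refl x⟩
      rw [edist_dist, Real.dist_eq] at hedist
      have habs : |K a - K x| ≤ (eVariationOn K (Set.Icc a x)).toReal := by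
        have := ENNReal.toReal_mono hfin2 hedist
        rwa [ENNReal.toReal_ofReal (abs_nonneg _)] at this
      have hKle : K a ≤ (H x - H a) + K x := by
        have := (abs_le.1 habs).2
        rw [← hHx] at this
        linarith
      calc ENNReal.ofReal (K a) ≤ ENNReal.ofReal ((H x - H a) + K x) :=
            ENNReal.ofReal_le_ofReal hKle
        _ = ENNReal.ofReal (H x - H a) + ENNReal.ofReal (K x) :=
            ENNReal.ofReal_add (sub_nonneg.2 (H.mono hax)) (hK0 x)
        _ = μ (Set.Ioc a x) + ENNReal.ofReal (K x) := by rw [hμdef, H.measure_Ioc]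
        _ ≤ μ (Set.Ioi a) + ENNReal.ofReal (K x) :=
            add_le_add_left (measure_mono Set.Ioc_subset_Ioi_self) _
    have hlim : Tendsto (fun x : ℝ => μ (Set.Ioi a) + ENNReal.ofReal (K x)) atTop
        (𝓝 (μ (Set.Ioi a) + 0)) :=
      Tendsto.add tendsto_const_nhds (by simpa using ENNReal.tendsto_ofReal hKinf)
    rw [add_zero] at hlim
    exact ge_of_tendsto hlim (eventually_atTop.2 ⟨a, key⟩)
  -- Step 2: the tail lintegral tends to 0
  set ν := (μ.restrict (Set.Ici 0)).withDensity f with hνdef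
  have hνfin : IsFiniteMeasure ν := by
    constructor
    rw [hνdef, withDensity_apply _ MeasurableSet.univ, Measure.restrict_univ]
    exact hint
  have hGb : ∀ b : ℝ, 0 ≤ b → (∫⁻ t in Set.Ioi b, f t ∂μ) = ν (Set.Ioi b) := by
    intro b hb
    rw [hνdef, withDensity_apply _ measurableSet_Ioi,
      Measure.restrict_restrict measurableSet_Ioi,
      Set.inter_eq_self_of_subset_left
        (Set.Ioi_subset_Ici_self.trans (Set.Ici_subset_Ici.mpr hb))]
  have hνIoi : Tendsto (fun b : ℝ => ν (Set.Ioi b)) atTop (𝓝 0) := by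
    have h1 : Tendsto (fun b : ℝ => ν (Set.Iic b)) atTop (𝓝 (ν Set.univ)) :=
      tendsto_measure_Iic_atTop ν
    have h2 : ∀ b : ℝ, ν (Set.Ioi b) = ν Set.univ - ν (Set.Iic b) := by
      intro b
      rw [← Set.compl_Iic, measure_compl measurableSet_Iic (measure_ne_top ν _)]
    simp_rw [h2]
    have := ENNReal.Tendsto.sub (tendsto_const_nhds :
      Tendsto (fun _ : ℝ => ν Set.univ) atTop (𝓝 (ν Set.univ))) h1 (Or.inl (measure_ne_top ν _))
    simpa using this
  have hGfin : ∀ b : ℝ, 0 ≤ b → (∫⁻ t in Set.Ioi b, f t ∂μ) ≠ ⊤ := by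
    intro b hb
    refine ne_top_of_le_ne_top hint.ne (lintegral_mono_set ?_)
    exact Set.Ioi_subset_Ici_self.trans (Set.Ici_subset_Ici.mpr hb)
  -- Step 3: Chebyshev bound
  have cheb : ∀ b : ℝ, 0 < b → ∀ a : ℝ, b < a →
      ENNReal.ofReal (K a * a ^ (d + 3)) ≤ ∫⁻ t in Set.Ioi b, f t ∂μ := by
    intro b hb a hab
    have ha : 0 < a := hb.trans hab
    rw [ENNReal.ofReal_mul (hK0 a)]
    calc ENNReal.ofReal (K a) * ENNReal.ofReal (a ^ (d + 3))
        ≤ μ (Set.Ioi a) * ENNReal.ofReal (a ^ (d + 3)) :=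
          mul_le_mul_left (step1 a ha.le) _
      _ = ∫⁻ _ in Set.Ioi a, ENNReal.ofReal (a ^ (d + 3)) ∂μ := by
          rw [setLIntegral_const, mul_comm]
      _ ≤ ∫⁻ t in Set.Ioi a, f t ∂μ := by
          refine setLIntegral_mono (by measurability) ?_
          intro t ht
          exact ENNReal.ofReal_le_ofReal (pow_le_pow_left₀ ha.le (le_of_lt ht) _)
      _ ≤ ∫⁻ t in Set.Ioi b, f t ∂μ := lintegral_mono_set (Set.Ioi_subset_Ioi hab.le)
  -- Step 4: the main bound for `b ≥ 1`
  have main : ∀ b : ℝ, 1 ≤ b →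
      b * ∫ a in Set.Ioi b, K a * a ^ (d + 1) ≤ (∫⁻ t in Set.Ioi b, f t ∂μ).toReal := by
    intro b hb
    have hb0 : (0 : ℝ) < b := lt_of_lt_of_le one_pos hb
    set C : ℝ := (∫⁻ t in Set.Ioi b, f t ∂μ).toReal with hCdef
    have hC0 : 0 ≤ C := ENNReal.toReal_nonneg
    have hptwise : ∀ a : ℝ, a ∈ Set.Ioi b → K a * a ^ (d + 1) ≤ C * a ^ (-2 : ℝ) := by
      intro a ha
      have hab : b < a := ha
      have ha0 : 0 < a := hb0.trans hab
      have h1 : K a * a ^ (d + 3) ≤ C :=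
        (ENNReal.ofReal_le_iff_le_toReal (hGfin b hb0.le)).1 (cheb b hb0 a hab)
      have h2 : (a : ℝ) ^ (d + 1) = a ^ (d + 3) * a ^ (-2 : ℝ) := by
        rw [← Real.rpow_natCast a (d + 3), ← Real.rpow_natCast a (d + 1),
          ← Real.rpow_add ha0]
        congr 1
        push_cast
        ring
      rw [h2, ← mul_assoc]
      exact mul_le_mul_of_nonneg_right h1 (Real.rpow_nonneg ha0.le _)
    have hIntg : IntegrableOn (fun a : ℝ => C * a ^ (-2 : ℝ)) (Set.Ioi b) :=
      (integrableOn_Ioi_rpow_of_lt (by norm_num) hb0).const_mul C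
    have hmono : (∫ a in Set.Ioi b, K a * a ^ (d + 1)) ≤
        ∫ a in Set.Ioi b, C * a ^ (-2 : ℝ) := by
      refine integral_mono_of_nonneg ?_ hIntg ?_
      · refine (ae_restrict_iff' measurableSet_Ioi).2 (Eventually.of_forall ?_)
        intro a ha
        exact mul_nonneg (hK0 a) (pow_nonneg (hb0.trans ha).le _)
      · exact (ae_restrict_iff' measurableSet_Ioi).2 (Eventually.of_forall hptwise)
    have hval : (∫ a in Set.Ioi b, C * a ^ (-2 : ℝ)) = C * b⁻¹ := by
      rw [integral_const_mul, integral_Ioi_rpow_of_lt (by norm_num) hb0]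
      norm_num [Real.rpow_neg_one]
    calc b * ∫ a in Set.Ioi b, K a * a ^ (d + 1)
        ≤ b * (C * b⁻¹) := by
          rw [← hval]
          exact mul_le_mul_of_nonneg_left hmono hb0.le
      _ = C := by field_simp
  -- Step 5: squeeze
  have h0 : ∀ b : ℝ, 0 ≤ b → 0 ≤ b * ∫ a in Set.Ioi b, K a * a ^ (d + 1) := by
    intro b hb
    refine mul_nonneg hb (setIntegral_nonneg measurableSet_Ioi ?_)
    intro a ha
    exact mul_nonneg (hK0 a) (pow_nonneg (le_trans hb (le_of_lt ha)) _)
  have hupper : Tendsto (fun b : ℝ => (∫⁻ t in Set.Ioi b, f t ∂μ).toReal) atTop (𝓝 0) := by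
    have hG : Tendsto (fun b : ℝ => ∫⁻ t in Set.Ioi b, f t ∂μ) atTop (𝓝 0) := by
      refine Tendsto.congr' ?_ hνIoi
      filter_upwards [eventually_ge_atTop (0 : ℝ)] with b hb using (hGb b hb).symm
    have := (ENNReal.tendsto_toReal (by simp)).comp hG
    exact this
  refine tendsto_of_tendsto_of_tendsto_of_le_of_le' tendsto_const_nhds hupper ?_ ?_
  · filter_upwards [eventually_ge_atTop (1 : ℝ)] with b hb using h0 b (by linarith)
  · filter_upwards [eventually_ge_atTop (1 : ℝ)] with b hb using main b hb
end

section
/- Let K: [0,∞) → [0,∞) satisfy K(a) ≤ H(∞) − H(a) for a nondecreasing bounded function H with ∫_{[0,∞)} b^{d+3} dH(b) < ∞. Then ∫_{ℝᵈ} K(‖v‖₂)·‖v‖₂³ dv ≤ (d+3)^{-1} · S_{d-1} · ∫_{[0,∞)} b^{d+3} dH(b), where S_{d-1} is the surface measure of the unit sphere in ℝᵈ. In particular this integral is finite. -/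
open Filter MeasureTheory Metric Set Module
open scoped ENNReal Topology

lemma lintegral_fun_norm_addHaar' {E : Type*} [NormedAddCommGroup E] [NormedSpace ℝ E]
    [Nontrivial E] [MeasurableSpace E] [BorelSpace E] [FiniteDimensional ℝ E]
    (μ : Measure E) [μ.IsAddHaarMeasure] (f : ℝ → ℝ≥0∞) (hf : Measurable f) :
    ∫⁻ x, f ‖x‖ ∂μ = (finrank ℝ E : ℝ≥0∞) * μ (ball 0 1) *
      ∫⁻ y in Ioi (0 : ℝ), ENNReal.ofReal (y ^ (finrank ℝ E - 1)) * f y := by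
  calc ∫⁻ x, f ‖x‖ ∂μ
      = ∫⁻ x : ({0}ᶜ : Set E), f ‖x.1‖ ∂(μ.comap (↑)) := by
        rw [lintegral_subtype_comap (measurableSet_singleton (0 : E)).compl
          (fun x => f ‖x‖), MeasureTheory.restrict_compl_singleton]
    _ = ∫⁻ p : sphere (0 : E) 1 × Ioi (0 : ℝ), f p.2
          ∂(μ.toSphere.prod (.volumeIoiPow (finrank ℝ E - 1))) := by
        rw [← μ.measurePreserving_homeomorphUnitSphereProd.lintegral_comp
          (f := fun p : sphere (0 : E) 1 × Ioi (0 : ℝ) => f p.2)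
          ((hf.comp measurable_subtype_coe).comp measurable_snd)]
        refine lintegral_congr fun x => ?_
        simp
    _ = (∫⁻ _ : sphere (0 : E) 1, (1 : ℝ≥0∞) ∂μ.toSphere) *
          ∫⁻ y : Ioi (0 : ℝ), f y ∂(Measure.volumeIoiPow (finrank ℝ E - 1)) := by
        rw [← lintegral_prod_mul (f := fun _ : sphere (0 : E) 1 => (1 : ℝ≥0∞))
          (g := fun y : Ioi (0 : ℝ) => f y.1) aemeasurable_const
          ((hf.comp measurable_subtype_coe)).aemeasurable]
        simp
    _ = (finrank ℝ E : ℝ≥0∞) * μ (ball 0 1) *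
          ∫⁻ y : Ioi (0 : ℝ), f y ∂(Measure.volumeIoiPow (finrank ℝ E - 1)) := by
        rw [lintegral_one, Measure.toSphere_apply_univ]
    _ = (finrank ℝ E : ℝ≥0∞) * μ (ball 0 1) *
          ∫⁻ y in Ioi (0 : ℝ), ENNReal.ofReal (y ^ (finrank ℝ E - 1)) * f y := by
        congr 1
        rw [Measure.volumeIoiPow, lintegral_withDensity_eq_lintegral_mul _
          ((measurable_subtype_coe.pow_const _).ennreal_ofReal)
          (g := fun y : Ioi (0 : ℝ) => f y.1) (hf.comp measurable_subtype_coe)]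
        exact lintegral_subtype_comap measurableSet_Ioi
          (fun y => ENNReal.ofReal (y ^ (finrank ℝ E - 1)) * f y)

/-- If `K : [0,∞) → [0,∞)` satisfies `K a ≤ H(∞) - H a` for a nondecreasing
bounded function `H` with `∫_{[0,∞)} b^(d+3) dH(b) < ∞`, then
`∫_{ℝᵈ} K(‖v‖)·‖v‖³ dv ≤ (d+3)⁻¹ · S_{d-1} · ∫_{[0,∞)} b^(d+3) dH(b)`, where
`S_{d-1} = d · vol(B(0,1))` is the surface measure of the unit sphere of `ℝᵈ`.
In particular the left-hand integral is finite. -/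
theorem stmt4 (d : ℕ) (hd : 1 ≤ d) (K : ℝ → ℝ) (hK0 : ∀ a, 0 ≤ K a)
    (hKm : Measurable K)
    (H : StieltjesFunction ℝ) (hH0 : ∀ a, 0 ≤ a → 0 ≤ H a)
    (Hinf : ℝ) (hHinf : Tendsto H atTop (𝓝 Hinf))
    (hdom : ∀ a, 0 ≤ a → K a ≤ Hinf - H a) :
    ∫⁻ v : EuclideanSpace ℝ (Fin d), ENNReal.ofReal (K ‖v‖ * ‖v‖ ^ 3) ≤
      (((d : ℝ≥0∞) + 3))⁻¹ *
        ((d : ℝ≥0∞) * volume (ball (0 : EuclideanSpace ℝ (Fin d)) 1)) *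
        ∫⁻ b in Set.Ici (0 : ℝ), ENNReal.ofReal (b ^ (d + 3)) ∂H.measure := by
  haveI : Nonempty (Fin d) := Fin.pos_iff_nonempty.mp hd
  haveI : Nontrivial (EuclideanSpace ℝ (Fin d)) := inferInstance
  set ν : Measure ℝ := H.measure.restrict (Set.Ici 0) with hν
  -- tail bound
  have tail : ∀ a : ℝ, 0 ≤ a → ENNReal.ofReal (K a) ≤ H.measure (Ioi a) := by
    intro a ha
    have h1 : Tendsto (fun b => ENNReal.ofReal (H b - H a)) atTop
        (𝓝 (ENNReal.ofReal (Hinf - H a))) :=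
      (ENNReal.continuous_ofReal.tendsto _).comp (hHinf.sub_const _)
    have h2 : ENNReal.ofReal (Hinf - H a) ≤ H.measure (Ioi a) := by
      refine le_of_tendsto h1 (Eventually.of_forall fun b => ?_)
      rw [← H.measure_Ioc]
      exact measure_mono Ioc_subset_Ioi_self
    exact le_trans (ENNReal.ofReal_le_ofReal (hdom a ha)) h2
  -- layer cake
  have lc := lintegral_comp_eq_lintegral_meas_lt_mul ν (f := fun b => b)
    (g := fun t => t ^ (d + 2))
    (by filter_upwards [ae_restrict_mem measurableSet_Ici] with b hb using hb)
    measurable_id.aemeasurable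
    (fun t _ => intervalIntegral.intervalIntegrable_pow (d + 2))
    (by filter_upwards [ae_restrict_mem measurableSet_Ioi] with t ht using pow_nonneg ht.le _)
  -- polar coordinates
  have hfm : Measurable fun a : ℝ => ENNReal.ofReal (K a * a ^ 3) :=
    (hKm.mul (measurable_id.pow_const 3)).ennreal_ofReal
  have hpolar := lintegral_fun_norm_addHaar'
    (volume : Measure (EuclideanSpace ℝ (Fin d))) _ hfm
  rw [finrank_euclideanSpace_fin] at hpolar
  refine le_trans (le_of_eq hpolar) ?_
  set J := ∫⁻ b in Set.Ici (0 : ℝ), ENNReal.ofReal (b ^ (d + 3)) ∂H.measure with hJ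
  have key : (∫⁻ y in Ioi (0 : ℝ),
      ENNReal.ofReal (y ^ (d - 1)) * ENNReal.ofReal (K y * y ^ 3)) ≤
      ((d : ℝ≥0∞) + 3)⁻¹ * J := by
    calc ∫⁻ y in Ioi (0 : ℝ), ENNReal.ofReal (y ^ (d - 1)) * ENNReal.ofReal (K y * y ^ 3)
        = ∫⁻ y in Ioi (0 : ℝ), ENNReal.ofReal (y ^ (d + 2)) * ENNReal.ofReal (K y) := by
          refine setLIntegral_congr_fun measurableSet_Ioi (fun y hy => ?_)
          rw [← ENNReal.ofReal_mul (pow_nonneg hy.le _),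
            ← ENNReal.ofReal_mul (pow_nonneg hy.le _)]
          congr 1
          calc y ^ (d - 1) * (K y * y ^ 3) = y ^ (d - 1) * y ^ 3 * K y := by ring
            _ = y ^ (d + 2) * K y := by
                rw [← pow_add]
                congr 2
                omega
      _ ≤ ∫⁻ y in Ioi (0 : ℝ), ν {a | y < a} * ENNReal.ofReal (y ^ (d + 2)) := by
          refine lintegral_mono_ae ?_
          filter_upwards [ae_restrict_mem measurableSet_Ioi] with y hy
          rw [mul_comm (ν _)]
          refine mul_le_mul_right ?_ _
          have hset : {a : ℝ | y < a} = Ioi y := rfl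
          have : ν (Ioi y) = H.measure (Ioi y) := by
            rw [hν, Measure.restrict_apply measurableSet_Ioi]
            congr 1
            exact Set.inter_eq_left.mpr fun x hx => Set.mem_Ici.mpr (lt_trans hy hx).le
          rw [hset, this]
          exact tail y hy.le
      _ = ∫⁻ b, ENNReal.ofReal (∫ t in (0:ℝ)..b, t ^ (d + 2)) ∂ν := lc.symm
      _ = ∫⁻ b in Set.Ici (0 : ℝ),
            ((d : ℝ≥0∞) + 3)⁻¹ * ENNReal.ofReal (b ^ (d + 3)) ∂H.measure := by
          rw [hν]
          refine setLIntegral_congr_fun measurableSet_Ici (fun b hb => ?_)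
          rw [integral_pow]
          have h3 : ((0:ℝ) < (d : ℝ) + 3) := by positivity
          have : (b ^ (d + 2 + 1) - 0 ^ (d + 2 + 1)) / ((d + 2 : ℕ) + 1 : ℝ)
              = b ^ (d + 3) / ((d : ℝ) + 3) := by
            push_cast
            ring_nf
          rw [this, ENNReal.ofReal_div_of_pos h3, div_eq_mul_inv, mul_comm]
          congr 1
          rw [show ((d : ℝ) + 3) = ((d + 3 : ℕ) : ℝ) by push_cast; ring,
            ENNReal.ofReal_natCast]
          push_cast
          ring
      _ = ((d : ℝ≥0∞) + 3)⁻¹ * J := by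
          rw [hJ, lintegral_const_mul _ ((measurable_id'.pow_const _).ennreal_ofReal)]
  calc (d : ℝ≥0∞) * volume (ball (0 : EuclideanSpace ℝ (Fin d)) 1) *
        ∫⁻ y in Ioi (0 : ℝ), ENNReal.ofReal (y ^ (d - 1)) * ENNReal.ofReal (K y * y ^ 3)
      ≤ (d : ℝ≥0∞) * volume (ball (0 : EuclideanSpace ℝ (Fin d)) 1) *
        (((d : ℝ≥0∞) + 3)⁻¹ * J) := mul_le_mul_right key _
    _ = ((d : ℝ≥0∞) + 3)⁻¹ *
        ((d : ℝ≥0∞) * volume (ball (0 : EuclideanSpace ℝ (Fin d)) 1)) * J := by ring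
end

section
/- Let f, h: ℝᵐ → ℝ and k: ℝᵈ → ℝᵐ be C² functions with k(0) = x, and let G: [0,∞) → ℝ be locally bounded and measurable. Then for all c > 0, ∫_{B(0,c)} G(‖v‖₂)·⟨∇f(x), k'(0)(v)⟩·⟨∇h(x), k'(0)(v)⟩ dv = ⟨∇(f∘k)(0), ∇(h∘k)(0)⟩ · (1/d)·∫_{B(0,c)} G(‖v‖₂)·‖v‖₂² dv. -/
open MeasureTheory Metric
open scoped RealInnerProductSpace

variable {d : ℕ}

lemma grad_inner {n : ℕ} (f : EuclideanSpace ℝ (Fin n) → ℝ) (y v : EuclideanSpace ℝ (Fin n)) :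
    ⟪gradient f y, v⟫ = fderiv ℝ f y v := by
  rw [gradient]; exact InnerProductSpace.toDual_symm_apply

lemma myIntegrable (G : ℝ → ℝ) (hGm : Measurable G) (c C : ℝ) (hc : 0 < c)
    (hC : ∀ a ∈ Set.Icc (0:ℝ) c, |G a| ≤ C)
    (p : EuclideanSpace ℝ (Fin d) → ℝ) (hp : Continuous p) :
    IntegrableOn (fun v => G ‖v‖ * p v) (ball (0 : EuclideanSpace ℝ (Fin d)) c) := by
  obtain ⟨D, hD⟩ := (isCompact_closedBall (0 : EuclideanSpace ℝ (Fin d)) c).exists_bound_of_continuousOn hp.continuousOn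
  refine Integrable.mono' (g := fun _ => C * D) (integrableOn_const measure_ball_lt_top.ne)
    (((hGm.comp measurable_norm).mul hp.measurable).aestronglyMeasurable) ?_
  filter_upwards [ae_restrict_mem measurableSet_ball] with v hv
  rw [mem_ball_zero_iff] at hv
  have h1 : |G ‖v‖| ≤ C := hC _ ⟨norm_nonneg _, hv.le⟩
  have h2 : |p v| ≤ D := by simpa using hD v (mem_closedBall_zero_iff.2 hv.le)
  calc ‖G ‖v‖ * p v‖ = |G ‖v‖| * |p v| := abs_mul _ _
    _ ≤ C * D := mul_le_mul h1 h2 (abs_nonneg _) ((abs_nonneg _).trans h1)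

lemma changeVar (e : EuclideanSpace ℝ (Fin d) ≃ₗᵢ[ℝ] EuclideanSpace ℝ (Fin d))
    (F : EuclideanSpace ℝ (Fin d) → ℝ) (c : ℝ) :
    ∫ v in ball (0 : EuclideanSpace ℝ (Fin d)) c, F (e v) =
      ∫ v in ball (0 : EuclideanSpace ℝ (Fin d)) c, F v := by
  have hpre : e ⁻¹' (ball (0 : EuclideanSpace ℝ (Fin d)) c) = ball 0 c := by
    ext v; simp [mem_ball_zero_iff, e.norm_map]
  have := e.measurePreserving.setIntegral_preimage_emb e.toHomeomorph.measurableEmbedding F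
    (ball (0 : EuclideanSpace ℝ (Fin d)) c)
  rwa [hpre] at this

lemma offdiag (G : ℝ → ℝ) (c : ℝ) (i j : Fin d) (hij : i ≠ j) :
    ∫ v in ball (0 : EuclideanSpace ℝ (Fin d)) c, G ‖v‖ * (v i * v j) = 0 := by
  classical
  set e := LinearIsometryEquiv.piLpCongrRight 2
    (fun i' : Fin d => if i' = j then LinearIsometryEquiv.neg ℝ (E := ℝ)
      else LinearIsometryEquiv.refl ℝ ℝ) with he
  have h1 : ∀ (v : EuclideanSpace ℝ (Fin d)) (i' : Fin d),
      e v i' = if i' = j then -(v i') else v i' := by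
    intro v i'
    by_cases h : i' = j
    · subst h; simp [he]
    · simp [he, h]
  have key := changeVar e (fun v => G ‖v‖ * (v i * v j)) c
  have h2 : ∀ v : EuclideanSpace ℝ (Fin d),
      G ‖e v‖ * (e v i * e v j) = -(G ‖v‖ * (v i * v j)) := by
    intro v
    rw [e.norm_map, h1, h1]
    simp [hij]
  simp only [h2] at key
  rw [integral_neg] at key
  linarith

lemma diag (G : ℝ → ℝ) (c : ℝ) (i i₀ : Fin d) :
    ∫ v in ball (0 : EuclideanSpace ℝ (Fin d)) c, G ‖v‖ * (v i * v i) =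
      ∫ v in ball (0 : EuclideanSpace ℝ (Fin d)) c, G ‖v‖ * (v i₀ * v i₀) := by
  set e := LinearIsometryEquiv.piLpCongrLeft 2 ℝ ℝ (Equiv.swap i i₀) with he
  have h1 : ∀ v : EuclideanSpace ℝ (Fin d), e v i₀ = v i := by
    intro v
    simp only [he, LinearIsometryEquiv.piLpCongrLeft_apply, Equiv.piCongrLeft'_apply,
      Equiv.symm_swap]
    rw [Equiv.swap_apply_right]
  have key := changeVar e (fun v => G ‖v‖ * (v i₀ * v i₀)) c
  simp only [e.norm_map, h1] at key
  exact key

lemma diag_val (G : ℝ → ℝ) (hGm : Measurable G) (c C : ℝ) (hc : 0 < c)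
    (hC : ∀ a ∈ Set.Icc (0:ℝ) c, |G a| ≤ C) (hd : 1 ≤ d) (i : Fin d) :
    ∫ v in ball (0 : EuclideanSpace ℝ (Fin d)) c, G ‖v‖ * (v i * v i) =
      (1 / (d : ℝ)) * ∫ v in ball (0 : EuclideanSpace ℝ (Fin d)) c, G ‖v‖ * ‖v‖ ^ 2 := by
  have hcont : ∀ j : Fin d, Continuous fun v : EuclideanSpace ℝ (Fin d) => v j :=
    fun j => (continuous_apply j).comp (PiLp.continuous_ofLp 2 _)
  have hint : ∀ j : Fin d, IntegrableOn (fun v => G ‖v‖ * (v j * v j))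
      (ball (0 : EuclideanSpace ℝ (Fin d)) c) :=
    fun j => myIntegrable G hGm c C hc hC _ ((hcont j).mul (hcont j))
  have hsum : ∀ v : EuclideanSpace ℝ (Fin d),
      ∑ j : Fin d, G ‖v‖ * (v j * v j) = G ‖v‖ * ‖v‖ ^ 2 := by
    intro v
    rw [← Finset.mul_sum]
    congr 1
    rw [EuclideanSpace.norm_eq, Real.sq_sqrt (by positivity)]
    simp [sq]
  have h2 : ∑ j : Fin d, (∫ v in ball (0 : EuclideanSpace ℝ (Fin d)) c, G ‖v‖ * (v j * v j)) =
      ∫ v in ball (0 : EuclideanSpace ℝ (Fin d)) c, G ‖v‖ * ‖v‖ ^ 2 := by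
    rw [← integral_finset_sum _ (fun j _ => hint j)]
    simp_rw [hsum]
  have h3 : ∑ j : Fin d, (∫ v in ball (0 : EuclideanSpace ℝ (Fin d)) c, G ‖v‖ * (v j * v j)) =
      (d : ℝ) * ∫ v in ball (0 : EuclideanSpace ℝ (Fin d)) c, G ‖v‖ * (v i * v i) := by
    rw [Finset.sum_congr rfl (fun j _ => diag G c j i)]
    simp [Finset.sum_const, mul_comm]
  have hd0 : (d : ℝ) ≠ 0 := by positivity
  rw [h3] at h2
  field_simp
  rw [← h2]; simp only [sq]; ring

lemma mainlem (G : ℝ → ℝ) (hGm : Measurable G) (c C : ℝ) (hc : 0 < c)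
    (hC : ∀ a ∈ Set.Icc (0:ℝ) c, |G a| ≤ C) (hd : 1 ≤ d)
    (a b : EuclideanSpace ℝ (Fin d)) :
    ∫ v in ball (0 : EuclideanSpace ℝ (Fin d)) c, G ‖v‖ * ⟪a, v⟫ * ⟪b, v⟫ =
      ⟪a, b⟫ * ((1 / (d : ℝ)) *
        ∫ v in ball (0 : EuclideanSpace ℝ (Fin d)) c, G ‖v‖ * ‖v‖ ^ 2) := by
  have hcont : ∀ j : Fin d, Continuous fun v : EuclideanSpace ℝ (Fin d) => v j :=
    fun j => (continuous_apply j).comp (PiLp.continuous_ofLp 2 _)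
  have hint : ∀ i j : Fin d, IntegrableOn (fun v => G ‖v‖ * (v i * v j))
      (ball (0 : EuclideanSpace ℝ (Fin d)) c) :=
    fun i j => myIntegrable G hGm c C hc hC _ ((hcont i).mul (hcont j))
  have hexp : ∀ v : EuclideanSpace ℝ (Fin d),
      G ‖v‖ * ⟪a, v⟫ * ⟪b, v⟫ =
        ∑ i : Fin d, ∑ j : Fin d, (a i * b j) * (G ‖v‖ * (v i * v j)) := by
    intro v
    rw [PiLp.inner_apply, PiLp.inner_apply]
    simp only [RCLike.inner_apply, conj_trivial]
    rw [mul_assoc, Finset.sum_mul_sum, Finset.mul_sum]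
    refine Finset.sum_congr rfl fun i _ => ?_
    rw [Finset.mul_sum]
    refine Finset.sum_congr rfl fun j _ => ?_
    ring
  simp_rw [hexp]
  rw [integral_finset_sum _ (fun i _ => integrable_finset_sum _
    (fun j _ => (hint i j).const_mul _))]
  simp_rw [integral_finset_sum _ (fun j _ => (hint _ j).const_mul _), integral_const_mul]
  have hrow : ∀ i : Fin d,
      ∑ j : Fin d, (a i * b j) * (∫ v in ball (0 : EuclideanSpace ℝ (Fin d)) c,
          G ‖v‖ * (v i * v j)) =
        (a i * b i) * ((1 / (d : ℝ)) *
          ∫ v in ball (0 : EuclideanSpace ℝ (Fin d)) c, G ‖v‖ * ‖v‖ ^ 2) := by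
    intro i
    rw [Finset.sum_eq_single i]
    · rw [diag_val G hGm c C hc hC hd i]
    · intro j _ hj
      rw [offdiag G c i j (Ne.symm hj), mul_zero]
    · intro h; exact absurd (Finset.mem_univ i) h
  simp_rw [hrow]
  rw [← Finset.sum_mul, PiLp.inner_apply]
  simp only [RCLike.inner_apply, conj_trivial]
  congr 1; exact Finset.sum_congr rfl fun i _ => mul_comm _ _

/-- For `f, h : ℝᵐ → ℝ` and `k : ℝᵈ → ℝᵐ` of class `C²` with `k 0 = x`, and
`G : [0,∞) → ℝ` locally bounded measurable, for all `c > 0`,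
`∫_{B(0,c)} G(‖v‖)·⟨∇f(x), k'(0)v⟩·⟨∇h(x), k'(0)v⟩ dv
  = ⟨∇(f∘k)(0), ∇(h∘k)(0)⟩ · (1/d)·∫_{B(0,c)} G(‖v‖)·‖v‖² dv`. -/
theorem stmt7 (d m : ℕ) (hd : 1 ≤ d)
    (f h : EuclideanSpace ℝ (Fin m) → ℝ)
    (k : EuclideanSpace ℝ (Fin d) → EuclideanSpace ℝ (Fin m))
    (x : EuclideanSpace ℝ (Fin m))
    (hf : ContDiff ℝ 2 f) (hh : ContDiff ℝ 2 h) (hk : ContDiff ℝ 2 k) (hk0 : k 0 = x)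
    (G : ℝ → ℝ) (hGm : Measurable G)
    (hGb : ∀ r : ℝ, 0 < r → ∃ C : ℝ, ∀ a ∈ Set.Icc (0 : ℝ) r, |G a| ≤ C)
    (c : ℝ) (hc : 0 < c) :
    ∫ v in ball (0 : EuclideanSpace ℝ (Fin d)) c,
        G ‖v‖ * ⟪gradient f x, fderiv ℝ k 0 v⟫ * ⟪gradient h x, fderiv ℝ k 0 v⟫ =
      ⟪gradient (f ∘ k) 0, gradient (h ∘ k) 0⟫ *
        ((1 / (d : ℝ)) *
          ∫ v in ball (0 : EuclideanSpace ℝ (Fin d)) c, G ‖v‖ * ‖v‖ ^ 2) := by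
  subst hk0
  obtain ⟨C, hC⟩ := hGb c hc
  have hdf : DifferentiableAt ℝ f (k 0) := (hf.differentiable two_ne_zero).differentiableAt
  have hdh : DifferentiableAt ℝ h (k 0) := (hh.differentiable two_ne_zero).differentiableAt
  have hdk : DifferentiableAt ℝ k 0 := (hk.differentiable two_ne_zero).differentiableAt
  have hcf : fderiv ℝ (f ∘ k) 0 = (fderiv ℝ f (k 0)).comp (fderiv ℝ k 0) :=
    fderiv_comp 0 hdf hdk
  have hch : fderiv ℝ (h ∘ k) 0 = (fderiv ℝ h (k 0)).comp (fderiv ℝ k 0) :=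
    fderiv_comp 0 hdh hdk
  have key : ∀ v : EuclideanSpace ℝ (Fin d),
      G ‖v‖ * ⟪gradient f (k 0), fderiv ℝ k 0 v⟫ * ⟪gradient h (k 0), fderiv ℝ k 0 v⟫ =
        G ‖v‖ * ⟪gradient (f ∘ k) 0, v⟫ * ⟪gradient (h ∘ k) 0, v⟫ := by
    intro v
    rw [grad_inner, grad_inner, grad_inner, grad_inner, hcf, hch]
    simp
  simp_rw [key]
  exact mainlem G hGm c C hc hC hd _ _
end

section
/- Under the same hypotheses on 𝓜 and K, there exists a constant c > 0 such that for all x ∈ 𝓜 and all h > 0: h^{-(d+2)} ∫_𝓜 K(‖x−y‖₂/h)·‖x−y‖₂² μ(dy) ≤ c. -/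
set_option maxHeartbeats 1000000

open MeasureTheory Metric Manifold Filter
open scoped Manifold Topology ENNReal NNReal

/-- The length of a path, as the total variation over `[0,1]`. -/
noncomputable def pathLength {E : Type*} [PseudoEMetricSpace E] (γ : ℝ → E) : ℝ :=
  (eVariationOn γ (Set.Icc 0 1)).toReal

/-- The geodesic (intrinsic) distance between two points of an abstract manifold `M`
embedded in a Euclidean space via `ι`. -/
noncomputable def geodesicDist {M E : Type*} [TopologicalSpace M] [PseudoEMetricSpace E]
    (ι : M → E) (x y : M) : ℝ :=
  sInf {L : ℝ | ∃ γ : ℝ → M, ContinuousOn γ (Set.Icc 0 1) ∧ γ 0 = x ∧ γ 1 = y ∧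
    L = pathLength (ι ∘ γ)}


lemma euclidean_cb_bound (d : ℕ) :
    ∃ C : ℝ≥0∞, C ≠ ⊤ ∧ ∀ (w : EuclideanSpace ℝ (Fin d)) (R : ℝ), 0 ≤ R →
      μH[(d : ℝ)] (Metric.closedBall w R) ≤ C * ENNReal.ofReal (R ^ d) := by
  set Kg : ℝ≥0 := (d : ℝ≥0) ^ (2⁻¹ : ℝ) with hKg
  refine ⟨(Kg : ℝ≥0∞) ^ (d:ℝ) * 2 ^ d, ?_, ?_⟩
  · exact ENNReal.mul_ne_top (ENNReal.rpow_ne_top_of_nonneg (Nat.cast_nonneg d) ENNReal.coe_ne_top)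
      (by simp)
  intro w R hR
  set e := WithLp.equiv 2 (Fin d → ℝ) with he
  have hlip : LipschitzWith Kg e.symm := by
    intro x y
    have := PiLp.antilipschitzWith_ofLp 2 (fun _ : Fin d => ℝ) (e.symm x) (e.symm y)
    simpa [he, hKg] using this
  have hsub : Metric.closedBall w R ⊆ e.symm '' Metric.closedBall (e w) R := by
    intro z hz
    refine ⟨e z, ?_, by simp⟩
    have := (PiLp.lipschitzWith_ofLp 2 (fun _ : Fin d => ℝ)).dist_le_mul z w
    simp only [ENNReal.coe_one, NNReal.coe_one, one_mul] at this
    exact mem_closedBall.2 (this.trans (mem_closedBall.1 hz))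
  have hpi : (μH[(d:ℝ)] : Measure (Fin d → ℝ)) = volume := by
    have hc : ((Fintype.card (Fin d) : ℝ)) = (d:ℝ) := by simp
    rw [← hc, hausdorffMeasure_pi_real]
  calc μH[(d:ℝ)] (Metric.closedBall w R) ≤ μH[(d:ℝ)] (e.symm '' Metric.closedBall (e w) R) :=
        measure_mono hsub
    _ ≤ (Kg : ℝ≥0∞) ^ (d:ℝ) * μH[(d:ℝ)] (Metric.closedBall (e w) R) :=
        hlip.hausdorffMeasure_image_le (Nat.cast_nonneg d) _
    _ = (Kg : ℝ≥0∞) ^ (d:ℝ) * ENNReal.ofReal ((2*R) ^ d) := by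
        rw [hpi, Real.volume_pi_closedBall _ hR, Fintype.card_fin]
    _ = (Kg : ℝ≥0∞) ^ (d:ℝ) * 2 ^ d * ENNReal.ofReal (R ^ d) := by
        rw [mul_pow, ENNReal.ofReal_mul (by positivity), mul_assoc]
        congr 2
        rw [ENNReal.ofReal_pow (by norm_num)]
        norm_num

lemma local_patch {d m : ℕ} {M : Type*} [TopologicalSpace M] [T2Space M]
    [CompactSpace M] [ConnectedSpace M] [MeasurableSpace M] [BorelSpace M]
    [ChartedSpace (EuclideanSpace ℝ (Fin d)) M] [IsManifold (𝓡 d) (⊤ : ℕ∞) M]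
    (ι : M → EuclideanSpace ℝ (Fin m))
    (hι : ContMDiff (𝓡 d) 𝓘(ℝ, EuclideanSpace ℝ (Fin m)) (⊤ : ℕ∞) ι)
    (himm : ∀ x : M, Function.Injective (mfderiv (𝓡 d) 𝓘(ℝ, EuclideanSpace ℝ (Fin m)) ι x))
    (p : M) :
    ∃ U : Set M, IsOpen U ∧ p ∈ U ∧ ∃ C : ℝ≥0∞, C ≠ ⊤ ∧
      ∀ (z : EuclideanSpace ℝ (Fin m)) (r : ℝ), 0 < r →
        μH[(d : ℝ)] (ι '' U ∩ Metric.ball z r) ≤ C * ENNReal.ofReal (r ^ d) := by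
  have hd0 : (0:ℝ) ≤ (d:ℝ) := Nat.cast_nonneg d
  obtain ⟨Cd, hCdT, hCd⟩ := euclidean_cb_bound d
  set φ := chartAt (EuclideanSpace ℝ (Fin d)) p with hφ
  have hp : p ∈ φ.source := mem_chart_source _ p
  set u0 := φ p with hu0def
  have hu0 : u0 ∈ φ.target := φ.map_source hp
  set f : EuclideanSpace ℝ (Fin d) → EuclideanSpace ℝ (Fin m) := ι ∘ φ.symm with hfdef
  have hfsm : ContMDiffOn (𝓡 d) 𝓘(ℝ, EuclideanSpace ℝ (Fin m)) (⊤ : ℕ∞) f φ.target :=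
    hι.comp_contMDiffOn contMDiffOn_chart_symm
  have hfC := contMDiffOn_iff_contDiffOn.mp hfsm
  have hct := hfC.contDiffAt (φ.open_target.mem_nhds hu0)
  have hder : HasStrictFDerivAt f (fderiv ℝ f u0) u0 :=
    hct.hasStrictFDerivAt (by simp)
  -- injectivity of the derivative
  have hsymm : MDifferentiableAt (𝓡 d) (𝓡 d) φ.symm u0 :=
    (mdifferentiable_chart p).mdifferentiableAt_symm hu0
  have hmf : mfderiv (𝓡 d) 𝓘(ℝ, EuclideanSpace ℝ (Fin m)) f u0
      = (mfderiv (𝓡 d) 𝓘(ℝ, EuclideanSpace ℝ (Fin m)) ι (φ.symm u0)).comp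
          (mfderiv (𝓡 d) (𝓡 d) φ.symm u0) :=
    mfderiv_comp u0 (hι.mdifferentiableAt (by simp)) hsymm
  have hinj2 : Function.Injective (mfderiv (𝓡 d) (𝓡 d) φ.symm u0) :=
    (mdifferentiable_chart p).symm.mfderiv_injective (by simpa using hu0)
  have hinjA : Function.Injective (fderiv ℝ f u0) := by
    have h1 : mfderiv (𝓡 d) 𝓘(ℝ, EuclideanSpace ℝ (Fin m)) f u0 = fderiv ℝ f u0 :=
      mfderiv_eq_fderiv
    rw [← h1, hmf]
    exact (himm (φ.symm u0)).comp hinj2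
  obtain ⟨Ka, hKa0, hKa⟩ := LinearMap.exists_antilipschitzWith
    ((fderiv ℝ f u0 : _ →L[ℝ] _) : _ →ₗ[ℝ] _) (LinearMap.ker_eq_bot.mpr (by exact hinjA))
  have hc : (0:ℝ≥0) < Ka⁻¹ / 2 := by positivity
  obtain ⟨s, hs, happrox⟩ := hder.approximates_deriv_on_nhds (Or.inr hc)
  obtain ⟨L, t, ht, hLip⟩ := hder.exists_lipschitzOnWith
  obtain ⟨ε, hε0, hεsub⟩ := Metric.mem_nhds_iff.mp
    (Filter.inter_mem (Filter.inter_mem hs ht) (φ.open_target.mem_nhds hu0))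
  have hKaR : (0:ℝ) < (Ka:ℝ) := hKa0
  -- anti-Lipschitz estimate on the small ball
  have key : ∀ u ∈ Metric.ball u0 ε, ∀ v ∈ Metric.ball u0 ε,
      ‖u - v‖ ≤ 2 * (Ka:ℝ) * ‖f u - f v‖ := by
    intro u hu v hv
    have hus : u ∈ s := (hεsub hu).1.1
    have hvs : v ∈ s := (hεsub hv).1.1
    have h1 : ‖u - v‖ ≤ (Ka:ℝ) * ‖(fderiv ℝ f u0) (u - v)‖ := by
      have := hKa.le_mul_dist u v
      rwa [dist_eq_norm, dist_eq_norm, ← map_sub] at this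
    have h2 : ‖f u - f v - (fderiv ℝ f u0) (u - v)‖ ≤ ((Ka⁻¹/2 : ℝ≥0) : ℝ) * ‖u - v‖ :=
      happrox u hus v hvs
    have h3 := norm_sub_le (f u - f v) (f u - f v - (fderiv ℝ f u0) (u - v))
    have heq : (f u - f v) - (f u - f v - (fderiv ℝ f u0) (u - v)) = (fderiv ℝ f u0) (u - v) := by
      abel
    rw [heq] at h3
    have hcoe : ((Ka⁻¹/2 : ℝ≥0) : ℝ) = ((Ka:ℝ))⁻¹ / 2 := by push_cast; ring
    rw [hcoe] at h2
    have hKne : (Ka:ℝ) ≠ 0 := hKaR.ne'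
    have hKK : (Ka:ℝ) * ((Ka:ℝ))⁻¹ = 1 := mul_inv_cancel₀ hKne
    nlinarith [h1, h2, h3, hKK, norm_nonneg (u - v), norm_nonneg (f u - f v), hKaR]
  refine ⟨φ.source ∩ φ ⁻¹' Metric.ball u0 ε,
    φ.isOpen_inter_preimage Metric.isOpen_ball, ⟨hp, by simpa [hu0def] using hε0⟩,
    (L:ℝ≥0∞) ^ (d:ℝ) * (Cd * ENNReal.ofReal ((2*(Ka:ℝ)*2) ^ d)), ?_, ?_⟩
  · exact ENNReal.mul_ne_top (ENNReal.rpow_ne_top_of_nonneg hd0 ENNReal.coe_ne_top)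
      (ENNReal.mul_ne_top hCdT ENNReal.ofReal_ne_top)
  intro z r hr
  set A' := Metric.ball u0 ε ∩ f ⁻¹' Metric.ball z r with hA'
  have hsub1 : ι '' (φ.source ∩ φ ⁻¹' Metric.ball u0 ε) ∩ Metric.ball z r ⊆ f '' A' := by
    rintro w ⟨⟨y, ⟨hy1, hy2⟩, rfl⟩, hw2⟩
    have hfy : f (φ y) = ι y := by simp [hfdef, φ.left_inv hy1]
    exact ⟨φ y, ⟨hy2, by simpa [hfy] using hw2⟩, hfy⟩
  rcases A'.eq_empty_or_nonempty with hA | ⟨w, hw⟩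
  · have : ι '' (φ.source ∩ φ ⁻¹' Metric.ball u0 ε) ∩ Metric.ball z r ⊆ (∅ : Set _) := by
      simpa [hA] using hsub1
    simp [Set.subset_empty_iff.mp this]
  have hsub2 : A' ⊆ Metric.closedBall w ((2*(Ka:ℝ)*2) * r) := by
    intro u hu
    have h1 : ‖u - w‖ ≤ 2 * (Ka:ℝ) * ‖f u - f w‖ := key u hu.1 w hw.1
    have h2 : ‖f u - f w‖ ≤ 2 * r := by
      have ha : dist (f u) z < r := hu.2
      have hb : dist (f w) z < r := hw.2
      have := dist_triangle (f u) z (f w)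
      rw [← dist_eq_norm]
      rw [dist_comm] at hb
      nlinarith [this, ha, hb]
    rw [Metric.mem_closedBall, dist_eq_norm]
    have h4 : 2 * (Ka:ℝ) * ‖f u - f w‖ ≤ 2 * (Ka:ℝ) * (2 * r) :=
      mul_le_mul_of_nonneg_left h2 (by positivity)
    calc ‖u - w‖ ≤ 2 * (Ka:ℝ) * ‖f u - f w‖ := h1
      _ ≤ 2 * (Ka:ℝ) * (2 * r) := h4
      _ = 2 * (Ka:ℝ) * 2 * r := by ring
  calc μH[(d:ℝ)] (ι '' (φ.source ∩ φ ⁻¹' Metric.ball u0 ε) ∩ Metric.ball z r)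
      ≤ μH[(d:ℝ)] (f '' A') := measure_mono hsub1
    _ ≤ (L:ℝ≥0∞) ^ (d:ℝ) * μH[(d:ℝ)] A' := by
        refine (hLip.mono ?_).hausdorffMeasure_image_le hd0
        exact fun u hu => (hεsub hu.1).1.2
    _ ≤ (L:ℝ≥0∞) ^ (d:ℝ) * μH[(d:ℝ)] (Metric.closedBall w ((2*(Ka:ℝ)*2) * r)) := by
        exact mul_le_mul_right (measure_mono hsub2) _
    _ ≤ (L:ℝ≥0∞) ^ (d:ℝ) * (Cd * ENNReal.ofReal (((2*(Ka:ℝ)*2) * r) ^ d)) := by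
        refine mul_le_mul_right (hCd w _ ?_) _
        positivity
    _ = (L:ℝ≥0∞) ^ (d:ℝ) * (Cd * ENNReal.ofReal ((2*(Ka:ℝ)*2) ^ d)) * ENNReal.ofReal (r ^ d) := by
        rw [mul_pow, ENNReal.ofReal_mul (by positivity)]
        ring

lemma global_bound {d m : ℕ} {M : Type*} [TopologicalSpace M] [T2Space M]
    [CompactSpace M] [ConnectedSpace M] [MeasurableSpace M] [BorelSpace M]
    [ChartedSpace (EuclideanSpace ℝ (Fin d)) M] [IsManifold (𝓡 d) (⊤ : ℕ∞) M]
    (ι : M → EuclideanSpace ℝ (Fin m))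
    (hι : ContMDiff (𝓡 d) 𝓘(ℝ, EuclideanSpace ℝ (Fin m)) (⊤ : ℕ∞) ι)
    (himm : ∀ x : M, Function.Injective (mfderiv (𝓡 d) 𝓘(ℝ, EuclideanSpace ℝ (Fin m)) ι x)) :
    ∃ C : ℝ≥0∞, C ≠ ⊤ ∧ ∀ (z : EuclideanSpace ℝ (Fin m)) (r : ℝ), 0 < r →
      μH[(d : ℝ)] (Set.range ι ∩ Metric.ball z r) ≤ C * ENNReal.ofReal (r ^ d) := by
  classical
  choose U hUopen hUmem C hCT hC using fun p : M => local_patch ι hι himm p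
  obtain ⟨t, ht⟩ := isCompact_univ.elim_finite_subcover U hUopen
    (fun x _ => Set.mem_iUnion.mpr ⟨x, hUmem x⟩)
  refine ⟨∑ p ∈ t, C p, ?_, fun z r hr => ?_⟩
  · exact (ENNReal.sum_lt_top.mpr fun p _ => (hCT p).lt_top).ne
  have hcover : Set.range ι ∩ Metric.ball z r ⊆ ⋃ p ∈ t, (ι '' U p ∩ Metric.ball z r) := by
    rintro w ⟨⟨y, rfl⟩, hw⟩
    obtain ⟨p, hpt, hyU⟩ := Set.mem_iUnion₂.mp (ht (Set.mem_univ y))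
    exact Set.mem_biUnion hpt ⟨⟨y, hyU, rfl⟩, hw⟩
  calc μH[(d:ℝ)] (Set.range ι ∩ Metric.ball z r)
      ≤ ∑ p ∈ t, μH[(d:ℝ)] (ι '' U p ∩ Metric.ball z r) :=
        (measure_mono hcover).trans (measure_biUnion_finset_le t _)
    _ ≤ ∑ p ∈ t, C p * ENNReal.ofReal (r ^ d) := Finset.sum_le_sum fun p _ => hC p z r hr
    _ = (∑ p ∈ t, C p) * ENNReal.ofReal (r ^ d) := (Finset.sum_mul _ _ _).symm

lemma K_le (K : ℝ → ℝ) (hBV : BoundedVariationOn K (Set.Ici 0))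
    (hKinf : Tendsto K atTop (𝓝 0)) (H : StieltjesFunction ℝ)
    (hH : ∀ a, 0 ≤ a → H a = (eVariationOn K (Set.Icc 0 a)).toReal)
    {u : ℝ} (hu : 0 ≤ u) :
    ENNReal.ofReal (K u) ≤ H.measure (Set.Ioi u) := by
  refine ENNReal.le_of_forall_pos_le_add fun ε hε _ => ?_
  have hev : ∀ᶠ b in atTop, K b < ε ∧ u ≤ b :=
    (hKinf.eventually (gt_mem_nhds (by exact_mod_cast hε : (0:ℝ) < ε))).and (eventually_ge_atTop u)
  obtain ⟨b, hbε, hub⟩ := hev.exists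
  have hVfin : ∀ x y : ℝ, 0 ≤ x → eVariationOn K (Set.Icc x y) ≠ ⊤ :=
    fun x y hx => hBV.mono (fun z hz => hx.trans hz.1)
  have hsplit : eVariationOn K (Set.Icc 0 u) + eVariationOn K (Set.Icc u b) =
      eVariationOn K (Set.Icc 0 b) := by
    have := eVariationOn.Icc_add_Icc K (s := Set.univ) hu hub (Set.mem_univ u)
    simpa [Set.univ_inter] using this
  have hHb : H b = (eVariationOn K (Set.Icc 0 u)).toReal + (eVariationOn K (Set.Icc u b)).toReal := by
    rw [hH b (hu.trans hub), ← hsplit, ENNReal.toReal_add (hVfin 0 u le_rfl) (hVfin u b hu)]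
  have hKub : K u - K b ≤ (eVariationOn K (Set.Icc u b)).toReal := by
    have h1 : edist (K u) (K b) ≤ eVariationOn K (Set.Icc u b) :=
      eVariationOn.edist_le K ⟨le_rfl, hub⟩ ⟨hub, le_rfl⟩
    have h2 := ENNReal.toReal_mono (hVfin u b hu) h1
    rw [edist_dist, ENNReal.toReal_ofReal dist_nonneg] at h2
    calc K u - K b ≤ |K u - K b| := le_abs_self _
      _ = dist (K u) (K b) := (Real.dist_eq _ _).symm
      _ ≤ _ := h2
  have hHu : H u = (eVariationOn K (Set.Icc 0 u)).toReal := hH u hu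
  have hKu : K u ≤ (H b - H u) + ε := by
    rw [hHb, hHu]; linarith
  have hmono : H u ≤ H b := H.mono hub
  calc ENNReal.ofReal (K u) ≤ ENNReal.ofReal ((H b - H u) + ε) := ENNReal.ofReal_le_ofReal hKu
    _ ≤ ENNReal.ofReal (H b - H u) + ENNReal.ofReal ε := ENNReal.ofReal_add_le
    _ ≤ H.measure (Set.Ioi u) + ε := by
        rw [← H.measure_Ioc u b]
        exact add_le_add (measure_mono Set.Ioc_subset_Ioi_self) (by simp)

lemma J_fin (d : ℕ) (H : StieltjesFunction ℝ)
    (hint : ∫⁻ a in Set.Ici (0 : ℝ), ENNReal.ofReal (a ^ (d + 3)) ∂H.measure < ⊤) :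
    ∫⁻ a in Set.Ioi (0 : ℝ), ENNReal.ofReal (a ^ (d + 2)) ∂H.measure < ⊤ := by
  have hsplit : Set.Ioi (0:ℝ) = Set.Ioc 0 1 ∪ Set.Ioi 1 :=
    (Set.Ioc_union_Ioi_eq_Ioi zero_le_one).symm
  rw [hsplit, lintegral_union measurableSet_Ioi (Set.Ioc_disjoint_Ioi le_rfl)]
  have h1 : ∫⁻ a in Set.Ioc (0:ℝ) 1, ENNReal.ofReal (a ^ (d + 2)) ∂H.measure
      ≤ H.measure (Set.Ioc 0 1) := by
    rw [← setLIntegral_one]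
    refine setLIntegral_mono measurable_const fun a ha => ?_
    simpa using ENNReal.ofReal_le_ofReal (pow_le_one₀ ha.1.le ha.2)
  have h2 : ∫⁻ a in Set.Ioi (1:ℝ), ENNReal.ofReal (a ^ (d + 2)) ∂H.measure
      ≤ ∫⁻ a in Set.Ici (0:ℝ), ENNReal.ofReal (a ^ (d + 3)) ∂H.measure := by
    calc ∫⁻ a in Set.Ioi (1:ℝ), ENNReal.ofReal (a ^ (d + 2)) ∂H.measure
        ≤ ∫⁻ a in Set.Ioi (1:ℝ), ENNReal.ofReal (a ^ (d + 3)) ∂H.measure := by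
          refine setLIntegral_mono ((measurable_id.pow_const _).ennreal_ofReal) fun a ha => ?_
          exact ENNReal.ofReal_le_ofReal (pow_le_pow_right₀ (le_of_lt ha) (by omega))
      _ ≤ _ := lintegral_mono_set fun a ha => le_of_lt (lt_of_lt_of_le zero_lt_one (le_of_lt (Set.mem_Ioi.mp ha)))
  have hfin1 : H.measure (Set.Ioc (0:ℝ) 1) < ⊤ := by
    rw [H.measure_Ioc]; exact ENNReal.ofReal_lt_top
  exact ENNReal.add_lt_top.mpr ⟨lt_of_le_of_lt h1 hfin1, lt_of_le_of_lt h2 hint⟩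

/-- Under the same hypotheses on the compact smooth `d`-dimensional
submanifold `𝓜 ⊆ ℝᵐ` and the kernel `K` (bounded variation, `K(∞) = 0`,
`∫₀^∞ a^(d+3) dH(a) < ∞`), there is a constant `c > 0` such that for all `x ∈ 𝓜` and
all `h > 0`: `h^{-(d+2)} ∫_𝓜 K(‖x-y‖₂/h)·‖x-y‖₂² μ(dy) ≤ c`. -/
theorem stmt16 {d m : ℕ} (hd : 1 ≤ d) {M : Type*} [TopologicalSpace M] [T2Space M]
    [CompactSpace M] [ConnectedSpace M] [MeasurableSpace M] [BorelSpace M]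
    [ChartedSpace (EuclideanSpace ℝ (Fin d)) M] [IsManifold (𝓡 d) (⊤ : ℕ∞) M]
    (ι : M → EuclideanSpace ℝ (Fin m))
    (hι : ContMDiff (𝓡 d) 𝓘(ℝ, EuclideanSpace ℝ (Fin m)) (⊤ : ℕ∞) ι)
    (hinj : Function.Injective ι)
    (himm : ∀ x : M, Function.Injective (mfderiv (𝓡 d) 𝓘(ℝ, EuclideanSpace ℝ (Fin m)) ι x))
    (K : ℝ → ℝ) (hK0 : ∀ a, 0 ≤ K a) (hBV : BoundedVariationOn K (Set.Ici 0))
    (hKinf : Tendsto K atTop (𝓝 0))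
    (H : StieltjesFunction ℝ)
    (hH : ∀ a, 0 ≤ a → H a = (eVariationOn K (Set.Icc 0 a)).toReal)
    (hint : ∫⁻ a in Set.Ici (0 : ℝ), ENNReal.ofReal (a ^ (d + 3)) ∂H.measure < ⊤) :
    ∃ c > 0, ∀ x : M, ∀ h : ℝ, 0 < h →
      (1 / h ^ (d + 2)) *
          ∫ y : M, K (‖ι x - ι y‖ / h) * ‖ι x - ι y‖ ^ 2
            ∂(Measure.comap ι μH[(d : ℝ)]) ≤ c := by
  classical
  obtain ⟨C, hCT, hC⟩ := global_bound ι hι himm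
  set J := ∫⁻ a in Set.Ioi (0:ℝ), ENNReal.ofReal (a ^ (d + 2)) ∂H.measure with hJdef
  have hJ : J < ⊤ := J_fin d H hint
  have hemb : MeasurableEmbedding ι :=
    ((hι.continuous).isClosedEmbedding hinj).measurableEmbedding
  set ν := μH[(d:ℝ)].restrict (Set.range ι) with hνdef
  haveI : SigmaFinite H.measure := by infer_instance
  -- ν is a finite measure
  have hx0 : Nonempty M := inferInstance
  obtain ⟨R0, hR0sub⟩ := (isCompact_range hι.continuous).isBounded.subset_ball
    (ι (Classical.arbitrary M))
  set R1 : ℝ := max R0 1 with hR1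
  have hR1pos : 0 < R1 := lt_of_lt_of_le zero_lt_one (le_max_right _ _)
  have hranges : Set.range ι ⊆ Metric.ball (ι (Classical.arbitrary M)) R1 :=
    hR0sub.trans (Metric.ball_subset_ball (le_max_left _ _))
  have hνfin : ν Set.univ < ⊤ := by
    rw [Measure.restrict_apply_univ]
    have : Set.range ι = Set.range ι ∩ Metric.ball (ι (Classical.arbitrary M)) R1 :=
      (Set.inter_eq_self_of_subset_left hranges).symm
    rw [this]
    exact lt_of_le_of_lt (hC _ _ hR1pos)
      (ENNReal.mul_lt_top hCT.lt_top ENNReal.ofReal_lt_top)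
  haveI : IsFiniteMeasure ν := ⟨hνfin⟩
  set c0 : ℝ := (C * J).toReal with hc0
  refine ⟨c0 + 1, by positivity, fun x h hh => ?_⟩
  have hpow : (0:ℝ) < h ^ (d + 2) := pow_pos hh _
  set g : EuclideanSpace ℝ (Fin m) → ℝ := fun z => K (‖ι x - z‖ / h) * ‖ι x - z‖ ^ 2 with hg
  -- main lintegral bound
  have hI : ∫⁻ z, ENNReal.ofReal (g z) ∂ν ≤ C * ENNReal.ofReal (h ^ (d + 2)) * J := by
    have step1 : ∫⁻ z, ENNReal.ofReal (g z) ∂ν ≤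
        ∫⁻ z, ∫⁻ a, (Set.Ioi (‖ι x - z‖ / h)).indicator
          (fun _ => ENNReal.ofReal (‖ι x - z‖ ^ 2)) a ∂H.measure ∂ν := by
      refine lintegral_mono fun z => ?_
      have hq : 0 ≤ ‖ι x - z‖ / h := div_nonneg (norm_nonneg _) hh.le
      calc ENNReal.ofReal (g z)
          = ENNReal.ofReal (K (‖ι x - z‖ / h)) * ENNReal.ofReal (‖ι x - z‖ ^ 2) := by
            rw [← ENNReal.ofReal_mul (hK0 _)]
        _ ≤ H.measure (Set.Ioi (‖ι x - z‖ / h)) * ENNReal.ofReal (‖ι x - z‖ ^ 2) :=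
            mul_le_mul_left (K_le K hBV hKinf H hH hq) _
        _ = _ := by
            rw [lintegral_indicator measurableSet_Ioi, setLIntegral_const, mul_comm]
    have hmeasT : MeasurableSet {q : EuclideanSpace ℝ (Fin m) × ℝ | ‖ι x - q.1‖ / h < q.2} := by
      apply measurableSet_lt
      · exact ((continuous_const.sub continuous_fst).norm.div_const h).measurable
      · exact measurable_snd
    have step2 : ∫⁻ z, ∫⁻ a, (Set.Ioi (‖ι x - z‖ / h)).indicator
          (fun _ => ENNReal.ofReal (‖ι x - z‖ ^ 2)) a ∂H.measure ∂ν
        = ∫⁻ a, ∫⁻ z, (Set.Ioi (‖ι x - z‖ / h)).indicator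
          (fun _ => ENNReal.ofReal (‖ι x - z‖ ^ 2)) a ∂ν ∂H.measure := by
      apply lintegral_lintegral_swap
      have : (Function.uncurry fun z a => (Set.Ioi (‖ι x - z‖ / h)).indicator
          (fun _ => ENNReal.ofReal (‖ι x - z‖ ^ 2)) a) =
          {q : EuclideanSpace ℝ (Fin m) × ℝ | ‖ι x - q.1‖ / h < q.2}.indicator
            (fun q => ENNReal.ofReal (‖ι x - q.1‖ ^ 2)) := by
        ext ⟨z, a⟩
        simp only [Function.uncurry, Set.indicator_apply, Set.mem_Ioi, Set.mem_setOf_eq]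
      rw [this]
      exact (Measurable.indicator
        (((continuous_const.sub continuous_fst).norm.pow 2).measurable.ennreal_ofReal)
        hmeasT).aemeasurable
    have step3 : ∀ a : ℝ, ∫⁻ z, (Set.Ioi (‖ι x - z‖ / h)).indicator
          (fun _ => ENNReal.ofReal (‖ι x - z‖ ^ 2)) a ∂ν
        ≤ (Set.Ioi (0:ℝ)).indicator
            (fun a => ENNReal.ofReal ((a*h) ^ 2) * (C * ENNReal.ofReal ((a*h) ^ d))) a := by
      intro a
      rcases le_or_gt a 0 with ha | ha
      · have hz : ∀ z : EuclideanSpace ℝ (Fin m),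
            (Set.Ioi (‖ι x - z‖ / h)).indicator
              (fun _ => ENNReal.ofReal (‖ι x - z‖ ^ 2)) a = 0 := by
          intro z
          apply Set.indicator_of_notMem
          simp only [Set.mem_Ioi, not_lt]
          exact ha.trans (div_nonneg (norm_nonneg _) hh.le)
        simp only [hz, lintegral_zero]
        exact zero_le
      · have hah : 0 < a * h := mul_pos ha hh
        have hzeq : ∀ z : EuclideanSpace ℝ (Fin m),
            (Set.Ioi (‖ι x - z‖ / h)).indicator
              (fun _ => ENNReal.ofReal (‖ι x - z‖ ^ 2)) a =
            (Metric.ball (ι x) (a*h)).indicator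
              (fun z => ENNReal.ofReal (‖ι x - z‖ ^ 2)) z := by
          intro z
          simp only [Set.indicator_apply, Set.mem_Ioi, Metric.mem_ball]
          congr 1
          simp only [eq_iff_iff]
          rw [div_lt_iff₀ hh, dist_comm, dist_eq_norm]
        simp only [hzeq]
        rw [lintegral_indicator measurableSet_ball,
          Set.indicator_of_mem (Set.mem_Ioi.mpr ha)]
        calc ∫⁻ z in Metric.ball (ι x) (a*h), ENNReal.ofReal (‖ι x - z‖ ^ 2) ∂ν
            ≤ ∫⁻ _ in Metric.ball (ι x) (a*h), ENNReal.ofReal ((a*h) ^ 2) ∂ν := by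
              refine setLIntegral_mono measurable_const fun z hz => ?_
              refine ENNReal.ofReal_le_ofReal (pow_le_pow_left₀ (norm_nonneg _) ?_ 2)
              rw [← dist_eq_norm, dist_comm]
              exact (Metric.mem_ball.mp hz).le
          _ = ENNReal.ofReal ((a*h) ^ 2) * ν (Metric.ball (ι x) (a*h)) := setLIntegral_const _ _
          _ ≤ ENNReal.ofReal ((a*h) ^ 2) * (C * ENNReal.ofReal ((a*h) ^ d)) := by
              refine mul_le_mul_right ?_ _
              rw [hνdef, Measure.restrict_apply measurableSet_ball, Set.inter_comm]
              exact hC (ι x) (a*h) hah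
    have step4 : ∫⁻ a, (Set.Ioi (0:ℝ)).indicator
          (fun a => ENNReal.ofReal ((a*h) ^ 2) * (C * ENNReal.ofReal ((a*h) ^ d))) a ∂H.measure
        ≤ C * ENNReal.ofReal (h ^ (d + 2)) * J := by
      rw [lintegral_indicator measurableSet_Ioi]
      have heq : ∀ a ∈ Set.Ioi (0:ℝ),
          ENNReal.ofReal ((a*h) ^ 2) * (C * ENNReal.ofReal ((a*h) ^ d)) =
          C * ENNReal.ofReal (h ^ (d + 2)) * ENNReal.ofReal (a ^ (d + 2)) := by
        intro a ha
        rw [mul_left_comm, mul_assoc, ← ENNReal.ofReal_mul (by positivity),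
          ← ENNReal.ofReal_mul (by positivity)]
        congr 2
        ring
      rw [setLIntegral_congr_fun measurableSet_Ioi heq]
      rw [hJdef, ← lintegral_const_mul' _ _
        (ENNReal.mul_ne_top hCT ENNReal.ofReal_ne_top)]
    calc ∫⁻ z, ENNReal.ofReal (g z) ∂ν ≤ _ := step1
      _ = _ := step2
      _ ≤ ∫⁻ a, (Set.Ioi (0:ℝ)).indicator
            (fun a => ENNReal.ofReal ((a*h) ^ 2) * (C * ENNReal.ofReal ((a*h) ^ d))) a
              ∂H.measure := lintegral_mono step3
      _ ≤ _ := step4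
  -- from lintegral to Bochner integral
  have hcomap : ∫⁻ y, ENNReal.ofReal (g (ι y)) ∂(Measure.comap ι μH[(d:ℝ)])
      = ∫⁻ z, ENNReal.ofReal (g z) ∂ν := by
    have h1 := hemb.lintegral_map (μ := Measure.comap ι μH[(d:ℝ)])
      (fun z => ENNReal.ofReal (g z))
    rw [hemb.map_comap] at h1
    exact h1.symm
  have hbound : ∫ y : M, g (ι y) ∂(Measure.comap ι μH[(d:ℝ)]) ≤ c0 * h ^ (d + 2) := by
    have hfinRHS : C * ENNReal.ofReal (h ^ (d + 2)) * J ≠ ⊤ :=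
      ENNReal.mul_ne_top (ENNReal.mul_ne_top hCT ENNReal.ofReal_ne_top) hJ.ne
    by_cases hm : AEStronglyMeasurable (fun y => g (ι y)) (Measure.comap ι μH[(d:ℝ)])
    · rw [integral_eq_lintegral_of_nonneg_ae
        (Filter.Eventually.of_forall fun y => mul_nonneg (hK0 _) (sq_nonneg _)) hm]
      calc (∫⁻ y, ENNReal.ofReal (g (ι y)) ∂(Measure.comap ι μH[(d:ℝ)])).toReal
          ≤ (C * ENNReal.ofReal (h ^ (d + 2)) * J).toReal := by
            refine ENNReal.toReal_mono hfinRHS ?_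
            rw [hcomap]; exact hI
        _ = c0 * h ^ (d + 2) := by
            rw [hc0, ENNReal.toReal_mul, ENNReal.toReal_mul, ENNReal.toReal_mul,
              ENNReal.toReal_ofReal hpow.le]
            ring
    · rw [integral_non_aestronglyMeasurable hm]
      positivity
  rw [one_div, inv_mul_le_iff₀ hpow]
  calc ∫ y : M, K (‖ι x - ι y‖ / h) * ‖ι x - ι y‖ ^ 2 ∂(Measure.comap ι μH[(d:ℝ)])
      ≤ c0 * h ^ (d + 2) := hbound
    _ ≤ h ^ (d + 2) * (c0 + 1) := by nlinarith [hpow, ENNReal.toReal_nonneg (a := C * J)]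
end
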